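/- arXiv:0808.3351 — 5 statements merged into one kernel-verified Lean document; each statement's English description precedes it below -/
import Mathlib

section
/- Let B ∈ V with 2B ∈ L, and assume the fractional part of B·h equals 1/2. Then for every u ∈ L and every integer k, the fractional part of (B + u + (k/2)h)² equals the fractional part of B². (In other words, if {B·h} = 1/2 then the fractional part {B²} is unchanged when B is replaced by B + u + (k/2)h, so it does not depend on the choice of the half-integral lift B.) -/
/-!
Replacing `B` by `B + u` with `u ∈ L` changes `B²` by `(2B)·u + u²` and `B·h` by `u·h`, both
integers. Once `{B·h} = 1/2` and `h² = 2`, the shift by `(k/2)h` changes `B²` by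
`k (B·h) + k²/2 = k ⌊B·h⌋ + k(k+1)/2`, again an integer.
-/

namespace LinearMap.BilinForm

variable {V : Type*} [AddCommGroup V] [Module ℚ V] (φ : LinearMap.BilinForm ℚ V)

theorem apply_add_add_self_of_symm (hφ : ∀ x y : V, φ x y = φ y x) (x y : V) :
    φ (x + y) (x + y) = φ x x + 2 * φ x y + φ y y := by
  simp only [map_add, LinearMap.add_apply, hφ y x]
  ring

theorem fract_apply_add_left_of_mem {L : Submodule ℤ V}
    (hL : ∀ u ∈ L, ∀ v ∈ L, ∃ n : ℤ, φ u v = n) {u h : V} (hu : u ∈ L) (hh : h ∈ L) (x : V) :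
    Int.fract (φ (x + u) h) = Int.fract (φ x h) := by
  obtain ⟨n, hn⟩ := hL u hu h hh
  rw [map_add, LinearMap.add_apply, hn, Int.fract_add_intCast]

theorem fract_apply_add_self_of_mem {L : Submodule ℤ V} (hφ : ∀ x y : V, φ x y = φ y x)
    (hL : ∀ u ∈ L, ∀ v ∈ L, ∃ n : ℤ, φ u v = n) {B u : V} (hB : (2 : ℚ) • B ∈ L) (hu : u ∈ L) :
    Int.fract (φ (B + u) (B + u)) = Int.fract (φ B B) := by
  obtain ⟨m, hm⟩ := hL _ hB u hu
  obtain ⟨n, hn⟩ := hL u hu u hu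
  rw [map_smul, LinearMap.smul_apply, smul_eq_mul] at hm
  rw [Int.fract_eq_fract]
  exact ⟨m + n, by rw [apply_add_add_self_of_symm φ hφ, hm, hn]; push_cast; ring⟩

theorem fract_apply_add_half_smul_self (hφ : ∀ x y : V, φ x y = φ y x) {B h : V}
    (hh : φ h h = 2) (hBh : Int.fract (φ B h) = 1 / 2) (k : ℤ) :
    Int.fract (φ (B + ((k : ℚ) / 2) • h) (B + ((k : ℚ) / 2) • h)) = Int.fract (φ B B) := by
  have hBh_floor : φ B h = ⌊φ B h⌋ + 1 / 2 := by
    rw [← hBh, Int.floor_add_fract]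
  obtain ⟨c, hc⟩ := Int.even_mul_succ_self k
  have hcq : (k : ℚ) * (k + 1) = c + c := by exact_mod_cast hc
  rw [Int.fract_eq_fract]
  refine ⟨k * ⌊φ B h⌋ + c, ?_⟩
  simp only [apply_add_add_self_of_symm φ hφ, map_smul, LinearMap.smul_apply, smul_eq_mul, hh]
  push_cast
  linear_combination (k : ℚ) * hBh_floor + (1 / 2) * hcq

end LinearMap.BilinForm

/-- Let `V` be a `ℚ`-vector space with a symmetric bilinear form `φ`,
`L ⊆ V` a `ℤ`-submodule on which `φ` is integer-valued, and `h ∈ L` with `h² = 2`.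
If `B ∈ V` satisfies `2B ∈ L` and the fractional part of `B·h` is `1/2`, then for
every `u ∈ L` and every integer `k`, the fractional part of `(B + u + (k/2)h)²`
equals the fractional part of `B²`. -/
theorem fract_B_sq_independent_of_lift
    {V : Type*} [AddCommGroup V] [Module ℚ V]
    (φ : LinearMap.BilinForm ℚ V) (hφsymm : ∀ x y : V, φ x y = φ y x)
    (L : Submodule ℤ V)
    (hLint : ∀ u ∈ L, ∀ v ∈ L, ∃ n : ℤ, φ u v = (n : ℚ))
    (h : V) (hhL : h ∈ L) (hh2 : φ h h = 2)
    (B : V) (hB : (2 : ℚ) • B ∈ L)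
    (hBh : Int.fract (φ B h) = 1 / 2) :
    ∀ u ∈ L, ∀ k : ℤ,
      Int.fract (φ (B + u + ((k : ℚ) / 2) • h) (B + u + ((k : ℚ) / 2) • h))
        = Int.fract (φ B B) := by
  intro u hu k
  have hBuh : Int.fract (φ (B + u) h) = 1 / 2 := by
    rw [LinearMap.BilinForm.fract_apply_add_left_of_mem φ hLint hu hhL, hBh]
  rw [LinearMap.BilinForm.fract_apply_add_half_smul_self φ hφsymm hh2 hBuh,
    LinearMap.BilinForm.fract_apply_add_self_of_mem φ hφsymm hLint hB hu]
end

section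
/- Let B ∈ V with 2B ∈ L and B ∉ L + ℚh. Define Λ_B = { (r, w, s) ∈ ℤ × L × ℤ : there exists d ∈ ℚ with w = rB + dh }, a ℤ-submodule of ℚ × V × ℚ. Then Λ_B equals the ℤ-span of the three elements (2, 2B, 0), (0, h, 0) and (0, 0, 1). (In particular, every element (r, w, s) of Λ_B has r even, and in the representation w = rB + dh the coefficient d is an integer.) -/
/-!
Write `(r, w, s) ∈ Λ_B` as `w = rB + dh`. If `r` were odd, `B` would lie in `L + ℚh`, so `r = 2k`
and `dh = w - k(2B) ∈ L`. Integrality of `φ` on `L` then forces `d ∈ ℤ`: `2d = φ(dh, h)` is an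
integer, and if it were odd then `h/2 ∈ L`, whereas `φ(h/2, h/2) = 1/2`. Hence
`(r, w, s) = k(2, 2B, 0) + d(0, h, 0) + s(0, 0, 1)`.
-/

/-- The lattice `Λ_B ⊆ ℚ × V × ℚ`: triples `(r, w, s)` with `r, s` integers,
`w ∈ L`, and `w = rB + dh` for some rational `d`.  It models the twisted integral
Hodge lattice `H^{*,*}(S, B, ℤ)`, the image of the `B`-twisted Chern character. -/
def twistedLattice {V : Type*} [AddCommGroup V] [Module ℚ V]
    (L : Submodule ℤ V) (B h : V) : Set (ℚ × V × ℚ) :=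
  { p | (∃ r : ℤ, p.1 = (r : ℚ)) ∧ (∃ s : ℤ, p.2.2 = (s : ℚ)) ∧
        p.2.1 ∈ L ∧ ∃ d : ℚ, p.2.1 = p.1 • B + d • h }

section

variable {V : Type*} [AddCommGroup V] [Module ℚ V] {L : Submodule ℤ V} {B h : V}

lemma zsmul_two_smul_eq (k : ℤ) : k • ((2 : ℚ) • B) = ((2 * k : ℤ) : ℚ) • B := by
  rw [← Int.cast_smul_eq_zsmul ℚ, smul_smul]
  push_cast
  ring_nf

theorem even_of_mem_of_eq_smul_add_smul (hB : (2 : ℚ) • B ∈ L)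
    (hBnt : ¬ ∃ u ∈ L, ∃ d : ℚ, B = u + d • h) {w : V} (hw : w ∈ L) {r : ℤ} {d : ℚ}
    (hwd : w = (r : ℚ) • B + d • h) : Even r := by
  by_contra hr
  obtain ⟨k, rfl⟩ := Int.not_even_iff_odd.mp hr
  refine hBnt ⟨w - k • ((2 : ℚ) • B), sub_mem hw (L.smul_mem k hB), -d, ?_⟩
  rw [zsmul_two_smul_eq, hwd]
  push_cast
  module

theorem half_smul_notMem (φ : LinearMap.BilinForm ℚ V)
    (hLint : ∀ u ∈ L, ∀ v ∈ L, ∃ n : ℤ, φ u v = (n : ℚ)) (hh2 : φ h h = 2) :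
    (2⁻¹ : ℚ) • h ∉ L := by
  intro hhalf
  obtain ⟨n, hn⟩ := hLint _ hhalf _ hhalf
  have hn2 : (2 * n : ℚ) = 1 := by
    simp only [map_smul, LinearMap.smul_apply, smul_eq_mul, hh2] at hn
    linarith
  have : (2 * n : ℤ) = 1 := by exact_mod_cast hn2
  omega

theorem exists_int_eq_of_smul_mem (φ : LinearMap.BilinForm ℚ V)
    (hLint : ∀ u ∈ L, ∀ v ∈ L, ∃ n : ℤ, φ u v = (n : ℚ)) (hhL : h ∈ L) (hh2 : φ h h = 2)
    {d : ℚ} (hd : d • h ∈ L) : ∃ m : ℤ, d = m := by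
  obtain ⟨n, hn⟩ := hLint _ hd _ hhL
  have h2d : 2 * d = n := by
    rw [← hn, map_smul, LinearMap.smul_apply, hh2, smul_eq_mul, mul_comm]
  obtain ⟨m, rfl | rfl⟩ := Int.even_or_odd' n
  · exact ⟨m, by push_cast at h2d; linarith⟩
  · refine absurd ?_ (half_smul_notMem φ hLint hh2)
    have hhalf : (2⁻¹ : ℚ) • h = d • h - m • h := by
      rw [← Int.cast_smul_eq_zsmul ℚ, ← sub_smul]
      push_cast at h2d
      congr 1
      linarith
    rw [hhalf]
    exact sub_mem hd (L.smul_mem m hhL)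

lemma zsmul_add_zsmul_add_zsmul_eq (a b c : ℤ) :
    a • ((2 : ℚ), ((2 : ℚ) • B, (0 : ℚ))) + b • ((0 : ℚ), (h, (0 : ℚ)))
        + c • ((0 : ℚ), ((0 : V), (1 : ℚ))) =
      (((2 * a : ℤ) : ℚ), (((2 * a : ℤ) : ℚ) • B + (b : ℚ) • h, (c : ℚ))) := by
  refine Prod.ext ?_ (Prod.ext ?_ ?_)
  · simp [mul_comm]
  · simp only [Prod.snd_add, Prod.fst_add, Prod.smul_snd, Prod.smul_fst, smul_zero, add_zero]
    rw [zsmul_two_smul_eq, Int.cast_smul_eq_zsmul ℚ b]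
  · simp

end

theorem twistedLattice_eq_span_general
    {V : Type*} [AddCommGroup V] [Module ℚ V]
    (φ : LinearMap.BilinForm ℚ V)
    (L : Submodule ℤ V)
    (hLint : ∀ u ∈ L, ∀ v ∈ L, ∃ n : ℤ, φ u v = (n : ℚ))
    (h : V) (hhL : h ∈ L) (hh2 : φ h h = 2)
    (B : V) (hB : (2 : ℚ) • B ∈ L)
    (hBnt : ¬ ∃ u ∈ L, ∃ d : ℚ, B = u + d • h) :
    twistedLattice L B h =
      ↑(Submodule.span ℤ
        ({((2 : ℚ), ((2 : ℚ) • B, (0 : ℚ))),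
          ((0 : ℚ), (h, (0 : ℚ))),
          ((0 : ℚ), ((0 : V), (1 : ℚ)))} : Set (ℚ × V × ℚ))) := by
  ext ⟨r, w, s⟩
  rw [SetLike.mem_coe, Submodule.mem_span_triple]
  simp only [zsmul_add_zsmul_add_zsmul_eq]
  constructor
  · rintro ⟨⟨r, rfl⟩, ⟨s, rfl⟩, hw, d, hwd⟩
    dsimp only at hw hwd
    obtain ⟨k, rfl⟩ := (even_of_mem_of_eq_smul_add_smul hB hBnt hw hwd).two_dvd
    have hdh : d • h ∈ L := by
      have : d • h = w - k • ((2 : ℚ) • B) := by rw [zsmul_two_smul_eq, hwd]; abel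
      exact this ▸ sub_mem hw (L.smul_mem k hB)
    obtain ⟨m, rfl⟩ := exists_int_eq_of_smul_mem φ hLint hhL hh2 hdh
    exact ⟨k, m, s, by rw [hwd]⟩
  · rintro ⟨a, b, c, hp⟩
    simp only [Prod.mk.injEq] at hp
    obtain ⟨rfl, rfl, rfl⟩ := hp
    have hw : ((2 * a : ℤ) : ℚ) • B + (b : ℚ) • h ∈ L := by
      rw [← zsmul_two_smul_eq, Int.cast_smul_eq_zsmul]
      exact add_mem (L.smul_mem a hB) (L.smul_mem b hhL)
    exact ⟨⟨2 * a, rfl⟩, ⟨c, rfl⟩, hw, b, rfl⟩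

/-- Let `V` be a `ℚ`-vector space with a symmetric bilinear form `φ`,
`L ⊆ V` a `ℤ`-submodule on which `φ` is integer-valued, and `h ∈ L` with `h² = 2`.
If `B ∈ V` satisfies `2B ∈ L` and `B ∉ L + ℚh`, then the lattice `Λ_B` equals the
`ℤ`-span of `(2, 2B, 0)`, `(0, h, 0)` and `(0, 0, 1)`. -/
theorem twistedLattice_eq_span
    {V : Type*} [AddCommGroup V] [Module ℚ V]
    (φ : LinearMap.BilinForm ℚ V) (hφsymm : ∀ x y : V, φ x y = φ y x)
    (L : Submodule ℤ V)
    (hLint : ∀ u ∈ L, ∀ v ∈ L, ∃ n : ℤ, φ u v = (n : ℚ))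
    (h : V) (hhL : h ∈ L) (hh2 : φ h h = 2)
    (B : V) (hB : (2 : ℚ) • B ∈ L)
    (hBnt : ¬ ∃ u ∈ L, ∃ d : ℚ, B = u + d • h) :
    twistedLattice L B h =
      ↑(Submodule.span ℤ
        ({((2 : ℚ), ((2 : ℚ) • B, (0 : ℚ))),
          ((0 : ℚ), (h, (0 : ℚ))),
          ((0 : ℚ), ((0 : V), (1 : ℚ)))} : Set (ℚ × V × ℚ))) :=
  twistedLattice_eq_span_general φ L hLint h hhL hh2 B hB hBnt
end

section
/- Let B ∈ V with 2B ∈ L and B ∉ L + ℚh, and assume that the fractional parts of B·h and of B² both equal 1/2. Define the symmetric bilinear form χ on ℚ × V × ℚ by χ((r₁,w₁,s₁),(r₂,w₂,s₂)) = r₁s₂ + s₁r₂ + 2r₁r₂ − w₁·w₂. Then there exists no pair of vectors v₁, v₂ in the lattice Λ_B = { (r, w, s) ∈ ℤ × L × ℤ : there exists d ∈ ℚ with w = rB + dh } such that χ(v₁,v₂) = 1 and χ(v₂,v₂) = 0. -/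
/-- The Euler form `χ((r₁,w₁,s₁),(r₂,w₂,s₂)) = r₁s₂ + s₁r₂ + 2r₁r₂ − w₁·w₂`
(the Mukai pairing of `ch^B √td(S)`). -/
def eulerForm {V : Type*} [AddCommGroup V] [Module ℚ V]
    (φ : LinearMap.BilinForm ℚ V) (p q : ℚ × V × ℚ) : ℚ :=
  p.1 * q.2.2 + p.2.2 * q.1 + 2 * p.1 * q.1 - φ p.2.1 q.2.1

/-!
An element `(r, rB + dh, s)` of `Λ_B` has `r` even, since `r` odd would put `B` in `L + ℚh`;
integrality of its pairings with `h` and with itself then forces `d ∈ ℤ`. Writing `r = 2m` and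
`d = f`, the half-integral parts of `B·h` and `B²` give `χ(v₁,v₂) ≡ m₁f₂ + m₂f₁` and
`χ(v,v)/2 ≡ m² + mf + f²` modulo 2. The form `x² + xy + y²` is anisotropic modulo 2, so
`χ(v₂,v₂) = 0` makes `m₂` and `f₂` even, and then `χ(v₁,v₂)` is even.
-/

theorem Int.even_and_even_of_even_sq_add_mul_add_sq {x y : ℤ}
    (hxy : Even (x ^ 2 + x * y + y ^ 2)) : Even x ∧ Even y := by
  simp only [Int.even_add, Int.even_pow, Int.even_mul] at hxy
  tauto

section TwistedLattice

variable {V : Type*} [AddCommGroup V] [Module ℚ V] {φ : LinearMap.BilinForm ℚ V}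
  {L : Submodule ℤ V} {h B : V}

theorem exists_eq_two_mul_of_mem_twistedLattice (hB : (2 : ℚ) • B ∈ L)
    (hBnt : ¬ ∃ u ∈ L, ∃ d : ℚ, B = u + d • h) {p : ℚ × V × ℚ}
    (hp : p ∈ twistedLattice L B h) : ∃ m : ℤ, p.1 = 2 * m := by
  obtain ⟨⟨r, hr⟩, -, hwL, d, hw⟩ := hp
  obtain ⟨m, rfl | rfl⟩ := Int.even_or_odd' r
  · exact ⟨m, by rw [hr]; push_cast; ring⟩
  refine absurd ⟨p.2.1 - m • (2 : ℚ) • B, sub_mem hwL (L.smul_mem m hB), -d, ?_⟩ hBnt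
  rw [hw, hr, ← Int.cast_smul_eq_zsmul ℚ]
  push_cast
  module

theorem exists_int_eq_of_two_mul_smul_add_smul_mem (hφsymm : ∀ x y : V, φ x y = φ y x)
    (hLint : ∀ u ∈ L, ∀ v ∈ L, ∃ n : ℤ, φ u v = (n : ℚ)) (hhL : h ∈ L) (hh2 : φ h h = 2)
    {a b : ℤ} (hBB : φ B B = a + 1 / 2) (hBh : φ B h = b + 1 / 2) {m : ℤ} {d : ℚ}
    (hw : (2 * m : ℚ) • B + d • h ∈ L) : ∃ f : ℤ, d = f := by
  have hhB : φ h B = b + 1 / 2 := by rw [hφsymm, hBh]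
  obtain ⟨n₁, hn₁⟩ := hLint _ hw h hhL
  obtain ⟨n₂, hn₂⟩ := hLint _ hw _ hw
  simp only [map_add, map_smul, LinearMap.add_apply, LinearMap.smul_apply, smul_eq_mul, hh2,
    hBB, hBh, hhB] at hn₁ hn₂
  -- pairing with `h` gives `2d ∈ ℤ`, and then the self-pairing gives `(2d)² ∈ 2ℤ`
  set e : ℤ := n₁ - 2 * m * b - m
  have hd : d = e / 2 := by push_cast [e]; linarith
  obtain ⟨f, hf⟩ : Even e := by
    rw [hd] at hn₂
    have he : ((e * e : ℤ) : ℚ) =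
        ((2 * (n₂ - 4 * m ^ 2 * a - 2 * m ^ 2 - 2 * m * e * b - m * e) : ℤ) : ℚ) := by
      push_cast
      linear_combination 2 * hn₂
    have : Even (e * e) := even_iff_two_dvd.mpr ⟨_, Int.cast_injective he⟩
    simpa [Int.even_mul] using this
  exact ⟨f, by rw [hd, hf]; push_cast; ring⟩

theorem exists_eq_of_mem_twistedLattice (hφsymm : ∀ x y : V, φ x y = φ y x)
    (hLint : ∀ u ∈ L, ∀ v ∈ L, ∃ n : ℤ, φ u v = (n : ℚ)) (hhL : h ∈ L) (hh2 : φ h h = 2)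
    (hB : (2 : ℚ) • B ∈ L) (hBnt : ¬ ∃ u ∈ L, ∃ d : ℚ, B = u + d • h)
    {a b : ℤ} (hBB : φ B B = a + 1 / 2) (hBh : φ B h = b + 1 / 2) {p : ℚ × V × ℚ}
    (hp : p ∈ twistedLattice L B h) :
    ∃ m f s : ℤ, p = ((2 * m : ℚ), (2 * m : ℚ) • B + (f : ℚ) • h, (s : ℚ)) := by
  obtain ⟨m, hm⟩ := exists_eq_two_mul_of_mem_twistedLattice hB hBnt hp
  obtain ⟨-, ⟨s, hs⟩, hwL, d, hw⟩ := hp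
  rw [hm] at hw
  obtain ⟨f, rfl⟩ :=
    exists_int_eq_of_two_mul_smul_add_smul_mem hφsymm hLint hhL hh2 hBB hBh (hw ▸ hwL)
  exact ⟨m, f, s, Prod.ext hm (Prod.ext hw hs)⟩

theorem eulerForm_eq (hφsymm : ∀ x y : V, φ x y = φ y x) (hh2 : φ h h = 2)
    {a b : ℤ} (hBB : φ B B = a + 1 / 2) (hBh : φ B h = b + 1 / 2) (m₁ f₁ s₁ m₂ f₂ s₂ : ℤ) :
    eulerForm φ ((2 * m₁ : ℚ), (2 * m₁ : ℚ) • B + (f₁ : ℚ) • h, (s₁ : ℚ))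
        ((2 * m₂ : ℚ), (2 * m₂ : ℚ) • B + (f₂ : ℚ) • h, (s₂ : ℚ)) =
      ((2 * (m₁ * s₂ + m₂ * s₁ + 3 * m₁ * m₂ - 2 * m₁ * m₂ * a - (m₁ * f₂ + m₂ * f₁) * b
        - f₁ * f₂) - (m₁ * f₂ + m₂ * f₁) : ℤ) : ℚ) := by
  have hhB : φ h B = b + 1 / 2 := by rw [hφsymm, hBh]
  simp only [eulerForm, map_add, map_smul, LinearMap.add_apply, LinearMap.smul_apply,
    smul_eq_mul, hh2, hBB, hBh, hhB]
  push_cast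
  ring

end TwistedLattice

/-- Let `V` be a `ℚ`-vector space with a symmetric bilinear form `φ`,
`L ⊆ V` a `ℤ`-submodule on which `φ` is integer-valued, and `h ∈ L` with `h² = 2`.
Let `B ∈ V` with `2B ∈ L`, `B ∉ L + ℚh`, and with the fractional parts of `B·h`
and `B²` both equal to `1/2`.  Then there is no pair of vectors `v₁, v₂ ∈ Λ_B`
with `χ(v₁,v₂) = 1` and `χ(v₂,v₂) = 0`. -/
theorem no_numerical_point_class
    {V : Type*} [AddCommGroup V] [Module ℚ V]
    (φ : LinearMap.BilinForm ℚ V) (hφsymm : ∀ x y : V, φ x y = φ y x)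
    (L : Submodule ℤ V)
    (hLint : ∀ u ∈ L, ∀ v ∈ L, ∃ n : ℤ, φ u v = (n : ℚ))
    (h : V) (hhL : h ∈ L) (hh2 : φ h h = 2)
    (B : V) (hB : (2 : ℚ) • B ∈ L)
    (hBnt : ¬ ∃ u ∈ L, ∃ d : ℚ, B = u + d • h)
    (hBh : Int.fract (φ B h) = 1 / 2)
    (hBB : Int.fract (φ B B) = 1 / 2) :
    ¬ ∃ v₁ ∈ twistedLattice L B h, ∃ v₂ ∈ twistedLattice L B h,
        eulerForm φ v₁ v₂ = 1 ∧ eulerForm φ v₂ v₂ = 0 := by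
  rintro ⟨v₁, hv₁, v₂, hv₂, h₁₂, h₂₂⟩
  obtain ⟨a, hBB⟩ : ∃ a : ℤ, φ B B = a + 1 / 2 :=
    ⟨⌊φ B B⌋, by rw [← hBB, Int.floor_add_fract]⟩
  obtain ⟨b, hBh⟩ : ∃ b : ℤ, φ B h = b + 1 / 2 :=
    ⟨⌊φ B h⌋, by rw [← hBh, Int.floor_add_fract]⟩
  obtain ⟨m₁, f₁, s₁, rfl⟩ :=
    exists_eq_of_mem_twistedLattice hφsymm hLint hhL hh2 hB hBnt hBB hBh hv₁
  obtain ⟨m₂, f₂, s₂, rfl⟩ :=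
    exists_eq_of_mem_twistedLattice hφsymm hLint hhL hh2 hB hBnt hBB hBh hv₂
  rw [eulerForm_eq hφsymm hh2 hBB hBh] at h₁₂ h₂₂
  norm_cast at h₁₂ h₂₂
  have h_odd : Odd (m₁ * f₂ + m₂ * f₁) := by
    rw [Int.odd_iff]
    ring_nf at h₁₂ ⊢
    omega
  have h_even : Even (m₂ ^ 2 + m₂ * f₂ + f₂ ^ 2) := by
    rw [Int.even_iff]
    ring_nf at h₂₂ ⊢
    omega
  obtain ⟨⟨k, rfl⟩, ⟨l, rfl⟩⟩ := Int.even_and_even_of_even_sq_add_mul_add_sq h_even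
  exact Int.not_even_iff_odd.mpr h_odd ⟨m₁ * l + k * f₁, by ring⟩
end

section
/- Let a and b be odd integers. Define the symmetric bilinear form χ on ℤ³ by χ((x₁,y₁,z₁),(x₂,y₂,z₂)) = (8−2a)·x₁x₂ − b·(x₁y₂ + y₁x₂) + 2·(x₁z₂ + z₁x₂) − 2·y₁y₂, i.e., the form whose Gram matrix in the standard basis is [[8−2a, −b, 2], [−b, −2, 0], [2, 0, 0]]. Then there exists no pair of vectors v₁, v₂ ∈ ℤ³ with χ(v₁,v₂) = 1 and χ(v₂,v₂) = 0. -/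
/-!
Since `χ(v, v) = 2 q(v)` with `q(x, y, z) ≡ x² + xy + y² (mod 2)` when `a` and `b` are odd, and
`x² + xy + y²` is anisotropic over `𝔽₂`, an isotropic `v₂` has its first two coordinates even.
As the third column of the Gram matrix is even, `χ(v₁, v₂)` is then even and cannot be `1`.
-/

/-- The symmetric bilinear form on `ℤ³` with Gram matrix
`[[8−2a, −b, 2], [−b, −2, 0], [2, 0, 0]]` in the standard basis. -/
def gramForm (a b : ℤ) (v w : ℤ × ℤ × ℤ) : ℤ :=
  (8 - 2 * a) * v.1 * w.1 - b * (v.1 * w.2.1 + v.2.1 * w.1)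
    + 2 * (v.1 * w.2.2 + v.2.2 * w.1) - 2 * v.2.1 * w.2.1

theorem Int.even_and_even_of_even_of_odd_coeffs {c d e x y : ℤ} (hc : Odd c) (hd : Odd d)
    (he : Odd e) (h : Even (c * x ^ 2 + d * x * y + e * y ^ 2)) : Even x ∧ Even y := by
  rw [← Int.not_even_iff_odd] at hc hd he
  simp only [Int.even_add, Int.even_mul, Int.even_pow] at h
  tauto

lemma gramForm_self_eq_two_mul (a b : ℤ) (v : ℤ × ℤ × ℤ) :
    gramForm a b v v = 2 * ((4 - a) * v.1 ^ 2 + (-b) * v.1 * v.2.1 + (-1) * v.2.1 ^ 2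
      + 2 * (v.1 * v.2.2)) := by
  unfold gramForm
  ring

lemma even_fst_and_even_snd_of_gramForm_self_eq_zero {a b : ℤ} (ha : Odd a) (hb : Odd b)
    {v : ℤ × ℤ × ℤ} (hv : gramForm a b v v = 0) : Even v.1 ∧ Even v.2.1 := by
  rw [gramForm_self_eq_two_mul, mul_eq_zero, or_iff_right two_ne_zero] at hv
  have hsum := hv ▸ Even.zero
  exact Int.even_and_even_of_even_of_odd_coeffs ((by decide : Even (4 : ℤ)).sub_odd ha) hb.neg
    odd_one.neg ((Int.even_add.mp hsum).mpr (even_two_mul _))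

lemma even_gramForm_of_even {v : ℤ × ℤ × ℤ} (hx : Even v.1) (hy : Even v.2.1) (a b : ℤ)
    (w : ℤ × ℤ × ℤ) : Even (gramForm a b w v) := by
  simp [gramForm, Int.even_add, Int.even_sub, hx, hy]

/-- Let `a` and `b` be odd integers and let `χ` be the symmetric
bilinear form on `ℤ³` with Gram matrix `[[8−2a, −b, 2], [−b, −2, 0], [2, 0, 0]]`.
Then there is no pair of vectors `v₁, v₂ ∈ ℤ³` with `χ(v₁,v₂) = 1` and
`χ(v₂,v₂) = 0`. -/
theorem gramForm_no_point_class (a b : ℤ) (ha : Odd a) (hb : Odd b) :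
    ¬ ∃ v₁ v₂ : ℤ × ℤ × ℤ, gramForm a b v₁ v₂ = 1 ∧ gramForm a b v₂ v₂ = 0 := by
  rintro ⟨w, v, hwv, hvv⟩
  obtain ⟨hx, hy⟩ := even_fst_and_even_snd_of_gramForm_self_eq_zero ha hb hvv
  have hwv_even := even_gramForm_of_even hx hy a b w
  rw [hwv] at hwv_even
  exact Int.not_even_one hwv_even
end

section
/- Let a and b be odd integers and let x, y, z be integers satisfying (8−2a)·x² − 2b·x·y + 4·x·z − 2·y² = 0. Then y is even. -/
/-! Halving the equation and reducing mod 2 with `a`, `b` odd leaves `x² + xy + y² ≡ 0`.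
If `y` were odd, `x² + xy + y² = x(x + y) + y²` would be odd, as one of `x`, `x + y` is even. -/

theorem Int.even_sq_add_mul_add_sq_iff (x y : ℤ) :
    Even (x ^ 2 + x * y + y ^ 2) ↔ Even x ∧ Even y := by
  simp only [Int.even_add, Int.even_mul, Int.even_pow, ne_eq, OfNat.ofNat_ne_zero,
    not_false_eq_true, and_true]
  tauto

/-- Let `a` and `b` be odd integers and let `x, y, z` be integers
satisfying `(8−2a)x² − 2bxy + 4xz − 2y² = 0`.  Then `y` is even. -/
theorem y_even_of_isotropic (a b x y z : ℤ) (ha : Odd a) (hb : Odd b)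
    (hiso : (8 - 2 * a) * x ^ 2 - 2 * b * x * y + 4 * x * z - 2 * y ^ 2 = 0) :
    Even y := by
  obtain ⟨k, rfl⟩ := ha
  obtain ⟨l, rfl⟩ := hb
  have h : Even (x ^ 2 + x * y + y ^ 2) := ⟨(2 - k) * x ^ 2 - l * x * y + x * z, by linarith⟩
  exact ((Int.even_sq_add_mul_add_sq_iff x y).mp h).2
end
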